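/- Let C be a nonzero cyclic code of length n over R = F_q + uF_q, and let C_u = {b(x) ∈ F_q[x]/⟨x^n − 1⟩ : u·b(x) ∈ C}, which is a nonzero cyclic code of length n over F_q. Then the minimum Hamming distances coincide: d_H(C) = d_H(C_u). -/

import Mathlib

open Polynomial

noncomputable section

/-- The ambient ring `S[x]/(x^n - 1)`. -/
abbrev Amb (S : Type) [CommRing S] (n : ℕ) : Type := AdjoinRoot (X ^ n - 1 : S[X])

/-- The image of a polynomial `f ∈ S[x]` in `S[x]/(x^n - 1)`. -/
def toAmb (S : Type) [CommRing S] (n : ℕ) (f : S[X]) : Amb S n := AdjoinRoot.mk _ f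

lemma root_pow_sub_one (S : Type) [CommRing S] (n : ℕ) :
    (AdjoinRoot.root (X ^ n - 1 : S[X])) ^ n - 1 = 0 := by
  have h : (AdjoinRoot.mk (X ^ n - 1 : S[X])) (X ^ n - 1 : S[X]) = 0 := AdjoinRoot.mk_self
  simpa [map_sub, map_pow, AdjoinRoot.mk_X] using h

/-- The ring hom `S[x]/(x^n-1) → T[x]/(x^n-1)` induced by `φ : S →+* T`. -/
def liftAmb {S T : Type} [CommRing S] [CommRing T] (n : ℕ) (φ : S →+* T) :
    Amb S n →+* Amb T n :=
  AdjoinRoot.lift ((AdjoinRoot.of _).comp φ) (AdjoinRoot.root _) (by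
    have h := root_pow_sub_one T n
    simp [eval₂_sub, eval₂_pow, eval₂_one, eval₂_X, h])

/-- Reduction mod `u`: the homomorphism `π : R_n → F_q[x]/(x^n-1)` induced by
the projection `F_q + uF_q → F_q`. -/
def redMod (F : Type) [Field F] (n : ℕ) : Amb (DualNumber F) n →+* Amb F n :=
  liftAmb n (TrivSqZeroExt.fstHom F F F).toRingHom

/-- The inclusion `F_q[x]/(x^n-1) → R_n` induced by `F_q ⊆ F_q + uF_q`. -/
def emb (F : Type) [Field F] (n : ℕ) : Amb F n →+* Amb (DualNumber F) n :=
  liftAmb n (algebraMap F (DualNumber F))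

/-- The element `u` of `R_n = (F_q + uF_q)[x]/(x^n-1)`. -/
def uE (F : Type) [Field F] (n : ℕ) : Amb (DualNumber F) n :=
  AdjoinRoot.of _ (DualNumber.eps : DualNumber F)

/-- The torsion code `Tor(C) = {r ∈ F_q[x]/(x^n-1) : u·r ∈ C}` of a cyclic code
`C ⊆ R_n`. -/
def Tor (F : Type) [Field F] (n : ℕ) (C : Ideal (Amb (DualNumber F) n)) : Set (Amb F n) :=
  {r | uE F n * emb F n r ∈ C}

/-- A set of codewords (identified with residue classes in `S[x]/(x^n-1)`) is
reversible if, for each codeword with coefficient vector `(c_0, …, c_{n-1})`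
(i.e. each representative of degree `< n`), the reversed word `(c_{n-1}, …, c_0)`
is again a codeword.  Here `Polynomial.reflect (n-1)` realizes the reversal of
the coefficient vector of a polynomial of degree `< n`. -/
def ReversibleCode (S : Type) [CommRing S] (n : ℕ) (D : Set (Amb S n)) : Prop :=
  ∀ f : S[X], f.degree < (n : ℕ) → toAmb S n f ∈ D →
    toAmb S n (f.reflect (n - 1)) ∈ D

/-- The Euclidean dual code of a code `C ⊆ S[x]/(x^n-1)`: all residue classes whose
coefficient vector (of the degree `< n` representative) is orthogonal to the
coefficient vector of every codeword of `C`. -/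
def dualCode (S : Type) [CommRing S] (n : ℕ) (C : Set (Amb S n)) : Set (Amb S n) :=
  {w | ∀ wp : S[X], wp.degree < (n : ℕ) → toAmb S n wp = w →
    ∀ cp : S[X], cp.degree < (n : ℕ) → toAmb S n cp ∈ C →
      ∑ i ∈ Finset.range n, wp.coeff i * cp.coeff i = 0}

/-- The minimum Hamming distance of a code `C ⊆ S[x]/(x^n-1)`: the least Hamming
weight of (the coefficient vector of) a nonzero codeword. -/
def dH (S : Type) [CommRing S] (n : ℕ) (C : Set (Amb S n)) : ℕ :=
  sInf {d | ∃ cp : S[X], cp.degree < (n : ℕ) ∧ cp ≠ 0 ∧ toAmb S n cp ∈ C ∧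
    cp.support.card = d}

end

/-! Write a codeword of `C` as `f = a + u b` with `a, b ∈ F_q[x]`. If `a = 0`, then `b ∈ C_u` and
`b` has the weight of `f`; otherwise `u f = u a ∈ C`, so `a ∈ C_u` and `wt a ≤ wt f`. Conversely
`b ∈ C_u` gives the codeword `u b ∈ C` of the same weight as `b`. Hence every weight of `C_u` is a
weight of `C` and every weight of `C` dominates one of `C_u`, so the minima agree. -/

open TrivSqZeroExt
open scoped DualNumber

section Representatives

variable {S : Type} [CommRing S] {n : ℕ}

lemma monic_X_pow_sub_one (hn : 0 < n) : (X ^ n - 1 : S[X]).Monic := by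
  simpa using monic_X_pow_sub_C (1 : S) hn.ne'

variable [Nontrivial S]

lemma degree_X_pow_sub_one (hn : 0 < n) : (X ^ n - 1 : S[X]).degree = n := by
  simpa using degree_X_pow_sub_C hn (1 : S)

lemma exists_degree_lt_toAmb_eq (hn : 0 < n) (c : Amb S n) :
    ∃ p : S[X], p.degree < n ∧ toAmb S n p = c := by
  obtain ⟨f, rfl⟩ := AdjoinRoot.mk_surjective c
  refine ⟨f %ₘ (X ^ n - 1), ?_, ?_⟩
  · exact degree_X_pow_sub_one (S := S) hn ▸ degree_modByMonic_lt f (monic_X_pow_sub_one hn)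
  · rw [toAmb, ← AdjoinRoot.modByMonicHom_mk (monic_X_pow_sub_one hn)]
    exact AdjoinRoot.mk_leftInverse (monic_X_pow_sub_one hn) _

lemma toAmb_ne_zero_of_degree_lt (hn : 0 < n) {p : S[X]} (hp : p ≠ 0) (hpn : p.degree < n) :
    toAmb S n p ≠ 0 :=
  AdjoinRoot.mk_ne_zero_of_degree_lt (monic_X_pow_sub_one hn) hp
    (degree_X_pow_sub_one (S := S) hn ▸ hpn)

end Representatives

lemma liftAmb_toAmb {S T : Type} [CommRing S] [CommRing T] (n : ℕ) (φ : S →+* T) (f : S[X]) :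
    liftAmb n φ (toAmb S n f) = toAmb T n (f.map φ) := by
  rw [liftAmb, toAmb, AdjoinRoot.lift_mk, toAmb, ← AdjoinRoot.aeval_eq, aeval_def,
    AdjoinRoot.algebraMap_eq, eval₂_map]

section DualNumberPolynomial

variable {R : Type} [CommRing R]

/-- The `u`-component `b` of `f = a + u b`. -/
noncomputable def sndPoly (f : R[ε][X]) : R[X] :=
  ⟨⟨f.toFinsupp.coeff.mapRange snd snd_zero⟩⟩

lemma coeff_sndPoly (f : R[ε][X]) (i : ℕ) : (sndPoly f).coeff i = (f.coeff i).snd := by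
  rcases f with ⟨f⟩
  simp [sndPoly, coeff_ofFinsupp, Finsupp.mapRange_apply]

lemma coeff_C_eps_mul_map (b : R[X]) (i : ℕ) :
    (C ε * b.map (algebraMap R R[ε])).coeff i = inr (b.coeff i) := by
  ext <;> simp [coeff_C_mul, coeff_map, algebraMap_eq_inl]

lemma support_C_eps_mul_map (b : R[X]) :
    (C ε * b.map (algebraMap R R[ε])).support = b.support := by
  ext i
  simp only [mem_support_iff, coeff_C_eps_mul_map, ne_eq, inr_injective.eq_iff' (inr_zero R)]

lemma C_eps_mul_eq_C_eps_mul_map_fst (f : R[ε][X]) :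
    C ε * f = C ε * (f.map (fstHom R R R).toRingHom).map (algebraMap R R[ε]) := by
  ext i <;> simp [coeff_C_mul, coeff_map, algebraMap_eq_inl]

lemma eq_C_eps_mul_map_sndPoly {f : R[ε][X]} (hf : f.map (fstHom R R R).toRingHom = 0) :
    f = C ε * (sndPoly f).map (algebraMap R R[ε]) := by
  ext i
  · simpa [coeff_map] using congrArg (coeff · i) hf
  · simp [coeff_C_mul, coeff_map, coeff_sndPoly, algebraMap_eq_inl]

end DualNumberPolynomial

section Torsion

variable {F : Type} [Field F] {n : ℕ}

lemma toAmb_mem_Tor_iff {I : Ideal (Amb F[ε] n)} (b : F[X]) :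
    toAmb F n b ∈ Tor F n I ↔ toAmb F[ε] n (C ε * b.map (algebraMap F F[ε])) ∈ I := by
  rw [Tor, Set.mem_ofPred_eq, emb, liftAmb_toAmb, uE, toAmb, toAmb, map_mul]
  rfl

lemma exists_mem_Tor_support_subset {I : Ideal (Amb F[ε] n)} {f : F[ε][X]}
    (hfI : toAmb F[ε] n f ∈ I) (hf : f ≠ 0) :
    ∃ b : F[X], b ≠ 0 ∧ toAmb F n b ∈ Tor F n I ∧ b.support ⊆ f.support := by
  by_cases ha : f.map (fstHom F F F).toRingHom = 0
  · have hfb := eq_C_eps_mul_map_sndPoly ha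
    refine ⟨sndPoly f, ?_, ?_, ?_⟩
    · rintro hb
      rw [hb, Polynomial.map_zero, mul_zero] at hfb
      exact hf hfb
    · rwa [toAmb_mem_Tor_iff, ← hfb]
    · conv_rhs => rw [hfb, support_C_eps_mul_map]
  · refine ⟨_, ha, ?_, support_map_subset _ f⟩
    rw [toAmb_mem_Tor_iff, ← C_eps_mul_eq_C_eps_mul_map_fst, toAmb, map_mul]
    exact I.mul_mem_left _ hfI

end Torsion

def codeWeights (S : Type) [CommRing S] (n : ℕ) (D : Set (Amb S n)) : Set ℕ :=
  {d | ∃ cp : S[X], cp.degree < (n : ℕ) ∧ cp ≠ 0 ∧ toAmb S n cp ∈ D ∧ cp.support.card = d}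

lemma dH_eq_sInf_codeWeights (S : Type) [CommRing S] (n : ℕ) (D : Set (Amb S n)) :
    dH S n D = sInf (codeWeights S n D) :=
  rfl

section Weights

variable {S : Type} [CommRing S] [Nontrivial S] {n : ℕ}

lemma codeWeights_nonempty (hn : 0 < n) {I : Ideal (Amb S n)} (hI : I ≠ ⊥) :
    (codeWeights S n I).Nonempty := by
  obtain ⟨c, hcI, hc⟩ := Submodule.exists_mem_ne_zero_of_ne_bot hI
  obtain ⟨p, hpn, rfl⟩ := exists_degree_lt_toAmb_eq hn c
  exact ⟨_, p, hpn, by rintro rfl; exact hc (map_zero _), hcI, rfl⟩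

lemma exists_mem_ne_zero_of_codeWeights_nonempty (hn : 0 < n) {D : Set (Amb S n)}
    (hD : (codeWeights S n D).Nonempty) : ∃ r ∈ D, r ≠ 0 := by
  obtain ⟨_, p, hpn, hp, hpD, -⟩ := hD
  exact ⟨_, hpD, toAmb_ne_zero_of_degree_lt hn hp hpn⟩

end Weights

section TorsionWeights

variable {F : Type} [Field F] {n : ℕ} (I : Ideal (Amb F[ε] n))

lemma codeWeights_Tor_subset : codeWeights F n (Tor F n I) ⊆ codeWeights F[ε] n I := by
  rintro _ ⟨b, hbn, hb, hbI, rfl⟩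
  have hsupp := support_C_eps_mul_map b
  refine ⟨_, (degree_mono hsupp.le).trans_lt hbn, ?_, (toAmb_mem_Tor_iff b).1 hbI, by rw [hsupp]⟩
  rwa [Ne, ← support_eq_empty, hsupp, support_eq_empty]

lemma exists_codeWeights_Tor_le :
    ∀ d ∈ codeWeights F[ε] n I, ∃ e ∈ codeWeights F n (Tor F n I), e ≤ d := by
  rintro _ ⟨f, hfn, hf, hfI, rfl⟩
  obtain ⟨b, hb, hbI, hbf⟩ := exists_mem_Tor_support_subset hfI hf
  exact ⟨_, ⟨b, (degree_mono hbf).trans_lt hfn, hb, hbI, rfl⟩, Finset.card_le_card hbf⟩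

end TorsionWeights

theorem stmt17_general {F : Type} [Field F] {n : ℕ} (hn : 0 < n)
    (C : Ideal (Amb (DualNumber F) n)) (hC : C ≠ ⊥) :
    (∃ r ∈ Tor F n C, r ≠ 0) ∧
      dH (DualNumber F) n ↑C = dH F n (Tor F n C) := by
  obtain ⟨d, hd⟩ := codeWeights_nonempty hn hC
  obtain ⟨e, he, -⟩ := exists_codeWeights_Tor_le C d hd
  refine ⟨exists_mem_ne_zero_of_codeWeights_nonempty hn ⟨e, he⟩, ?_⟩
  rw [dH_eq_sInf_codeWeights, dH_eq_sInf_codeWeights]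
  exact csInf_eq_csInf_of_forall_exists_le (exists_codeWeights_Tor_le C)
    fun e he => ⟨e, codeWeights_Tor_subset C he, le_rfl⟩

/-- for a nonzero cyclic code `C` over `R`, the torsion code
`C_u` is a nonzero code over `F_q` and `d_H(C) = d_H(C_u)`. -/
theorem stmt17 {F : Type} [Field F] [Fintype F] {n : ℕ} (hn : 0 < n)
    (C : Ideal (Amb (DualNumber F) n)) (hC : C ≠ ⊥) :
    (∃ r ∈ Tor F n C, r ≠ 0) ∧
      dH (DualNumber F) n ↑C = dH F n (Tor F n C) :=
  stmt17_general hn C hC
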